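/- arXiv:1310.7785 — 3 statements merged into one kernel-verified Lean document; each statement's English description precedes it below -/
import Mathlib

section
/- There exists ω ∈ (0, π] with the following property: for every 0 < α < ω there exists H_α > 0 such that ∫_ℝ (e^{α u²} − 1) dx ≤ H_α ‖u‖²_{L²(ℝ)} for every u ∈ H^{1/2}(ℝ) with [u] ≤ (2π)^{1/2}. -/
open MeasureTheory Real Set Filter Topology

noncomputable section

/-- Integrand of the squared Gagliardo `H^{1/2}` seminorm on `ℝ`. -/
def gagKer (u : ℝ → ℝ) : ℝ × ℝ → ℝ :=
  fun p => (u p.1 - u p.2) ^ 2 / |p.1 - p.2| ^ 2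

/-- Integrand of the Gagliardo inner product `⟨u,v⟩_X`. -/
def innerKer (u v : ℝ → ℝ) : ℝ × ℝ → ℝ :=
  fun p => (u p.1 - u p.2) * (v p.1 - v p.2) / |p.1 - p.2| ^ 2

/-- `u ∈ H^{1/2}(ℝ)` : `u ∈ L²(ℝ)` with finite Gagliardo seminorm. -/
def memH (u : ℝ → ℝ) : Prop :=
  Measurable u ∧ Integrable (fun x => (u x) ^ 2) ∧ Integrable (gagKer u)

/-- Squared Gagliardo seminorm `[u]²`. -/
def gagSq (u : ℝ → ℝ) : ℝ := ∫ p : ℝ × ℝ, gagKer u p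

/-- Gagliardo seminorm `[u]`, i.e. the norm `‖u‖_X`. -/
def gagNorm (u : ℝ → ℝ) : ℝ := Real.sqrt (gagSq u)

/-- Inner product `⟨u, v⟩_X`. -/
def innerX (u v : ℝ → ℝ) : ℝ := ∫ p : ℝ × ℝ, innerKer u v p

/-- `u ∈ X` : `u ∈ H^{1/2}(ℝ)` and `u = 0` a.e. outside `(0,1)`. -/
def memX (u : ℝ → ℝ) : Prop :=
  memH u ∧ ∀ᵐ x : ℝ, x ∉ Ioo (0 : ℝ) 1 → u x = 0

/-- `λ₁ = inf {[u]² : u ∈ X, ‖u‖_{L²(0,1)} = 1}`. -/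
def lam1 : ℝ :=
  sInf { t : ℝ | ∃ u : ℝ → ℝ, memX u ∧ (∫ x in Ioo (0 : ℝ) 1, (u x) ^ 2) = 1 ∧ gagSq u = t }

/-- Trudinger–Moser property with constant `ω`. -/
def TMprop (ω : ℝ) : Prop :=
  ∀ α : ℝ, 0 < α → α < 2 * π * ω →
    ∃ K : ℝ, 0 < K ∧ ∀ u : ℝ → ℝ, memX u → gagNorm u ≤ 1 →
      (∫⁻ x in Ioo (0 : ℝ) 1, ENNReal.ofReal (exp (α * (u x) ^ 2))) ≤ ENNReal.ofReal K

/-- The primitive `F(t) = ∫₀ᵗ f(τ) dτ`. -/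
def primF (f : ℝ → ℝ) : ℝ → ℝ := fun t => ∫ τ in (0 : ℝ)..t, f τ

/-- Hypotheses (H). -/
def HypH (f : ℝ → ℝ) : Prop :=
  Continuous f ∧ f 0 = 0 ∧
  (∃ t₀ > (0 : ℝ), ∃ M > (0 : ℝ),
    ∀ t : ℝ, t₀ ≤ |t| → 0 < primF f t ∧ primF f t ≤ M * |f t|) ∧
  (∀ t : ℝ, t ≠ 0 → 0 < 2 * primF f t ∧ 2 * primF f t ≤ f t * t) ∧
  (Filter.limsup (fun t => primF f t / t ^ 2) (𝓝[≠] (0 : ℝ)) < lam1 / (4 * π)) ∧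
  (∀ α : ℝ, 0 < α →
    Filter.Tendsto (fun t => |f t| * exp (-α * t ^ 2)) (Filter.cocompact ℝ) (𝓝 0))

/-- Hypotheses (H') with Trudinger–Moser constant `ω`. -/
def HypH' (f : ℝ → ℝ) (ω : ℝ) : Prop :=
  Continuous f ∧ f 0 = 0 ∧
  (∃ t₀ > (0 : ℝ), ∃ M > (0 : ℝ),
    ∀ t : ℝ, t₀ ≤ |t| → 0 < primF f t ∧ primF f t ≤ M * |f t|) ∧
  (∀ t : ℝ, t ≠ 0 → 0 < 2 * primF f t ∧ 2 * primF f t ≤ f t * t) ∧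
  (Filter.limsup (fun t => primF f t / t ^ 2) (𝓝[≠] (0 : ℝ)) < lam1 / (4 * π)) ∧
  ∃ α₀ : ℝ, 0 < α₀ ∧ α₀ < 2 * π * ω ∧
    (∀ α : ℝ, 0 < α → α < α₀ →
      Filter.Tendsto (fun t => |f t| * exp (-α * t ^ 2)) (Filter.cocompact ℝ) Filter.atTop) ∧
    (∀ α : ℝ, α₀ < α →
      Filter.Tendsto (fun t => |f t| * exp (-α * t ^ 2)) (Filter.cocompact ℝ) (𝓝 0)) ∧
    ∃ ψ : ℝ → ℝ, memX ψ ∧ gagNorm ψ = 1 ∧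
      ∃ b : ℝ, b < ω / (2 * α₀) ∧ ∀ t : ℝ, 0 < t →
        t ^ 2 / (4 * π) - (∫ x in Ioo (0 : ℝ) 1, primF f (t * ψ x)) ≤ b

/-- `u` is a (weak) solution of `(-Δ)^{1/2} u = f(u)` in `(0,1)`, `u = 0` outside. -/
def IsWeakSolution (f u : ℝ → ℝ) : Prop :=
  memX u ∧ ∀ v : ℝ → ℝ, memX v →
    IntegrableOn (fun x => f (u x) * v x) (Ioo (0 : ℝ) 1) ∧
    innerX u v / (2 * π) = ∫ x in Ioo (0 : ℝ) 1, f (u x) * v x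

/-- The energy functional `φ(u) = ‖u‖_X²/(4π) - ∫₀¹ F(u) dx`. -/
def phi (f u : ℝ → ℝ) : ℝ :=
  gagSq u / (4 * π) - ∫ x in Ioo (0 : ℝ) 1, primF f (u x)

/-- `⟨φ'(u), v⟩ = (1/(2π))⟨u,v⟩_X - ∫₀¹ f(u) v dx`. -/
def phiDeriv (f u v : ℝ → ℝ) : ℝ :=
  innerX u v / (2 * π) - ∫ x in Ioo (0 : ℝ) 1, f (u x) * v x

/-- The Palais–Smale condition at level `c`. -/
def PalaisSmaleAt (f : ℝ → ℝ) (c : ℝ) : Prop :=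
  ∀ u : ℕ → ℝ → ℝ, (∀ n, memX (u n)) →
    Filter.Tendsto (fun n => phi f (u n)) Filter.atTop (𝓝 c) →
    (∃ ε : ℕ → ℝ, Filter.Tendsto ε Filter.atTop (𝓝 0) ∧
      ∀ n, ∀ v : ℝ → ℝ, memX v → gagNorm v ≤ 1 → |phiDeriv f (u n) v| ≤ ε n) →
    ∃ w : ℝ → ℝ, memX w ∧ ∃ g : ℕ → ℕ, StrictMono g ∧
      Filter.Tendsto (fun k => gagNorm (fun x => u (g k) x - w x)) Filter.atTop (𝓝 0)

open scoped ENNReal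

/-!
Level sets of `|u|` have Gaussian decay. Cut `|u|` at the levels `aⱼ = 1 + j d` (`d = t / k`)
into the layers `min (max (|u| - aⱼ) 0) d`. Between two points their increments have one sign
and add up to at most the increment of `|u|`, so the Gagliardo energies `εⱼ` of the layers add up
to at most `[u]² ≤ 2π`. The `j`-th layer equals `d` on `{a_{j+1} ≤ |u|}` and `0` on
`B = {|u| ≤ aⱼ}`; if `|Bᶜ| ≤ m`, then `B` fills half of the annulus `m ≤ |x - y| ≤ 2m` around
every point, whence `εⱼ ≥ d² |{a_{j+1} ≤ |u|}| / (4m)`. Iterating from Chebyshev's bound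
`|{1 ≤ |u|}| ≤ ‖u‖₂²` gives `|{1 + t ≤ |u|}| ≤ ‖u‖₂² ∏ⱼ 4εⱼ/d² ≤ ‖u‖₂² exp (8πk²/t² - k)`,
and `k ≈ t²/(16π)` makes this `‖u‖₂² exp (-t²/(64π))`. For `α ≤ 1/(256π)` the integral of
`e^{αu²} - 1` over the shells `{n ≤ |u| ≤ n + 1}`, `n ≥ 12`, is then bounded by a geometric
series times `‖u‖₂²`, and on `{|u| < 12}` the integrand is at most `α e^{144α} u²`.
-/

def ramp (a d s : ℝ) : ℝ := min (max (s - a) 0) d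

lemma ramp_mono {a d : ℝ} : Monotone (ramp a d) := fun _ _ h =>
  min_le_min_right _ (max_le_max_right _ (sub_le_sub_right h a))

lemma lipschitzWith_ramp (a d : ℝ) : LipschitzWith 1 (ramp a d) := by
  refine LipschitzWith.of_dist_le_mul fun s t => ?_
  simp only [NNReal.coe_one, one_mul, Real.dist_eq, ramp]
  calc |min (max (s - a) 0) d - min (max (t - a) 0) d|
      ≤ max |max (s - a) 0 - max (t - a) 0| |d - d| := abs_min_sub_min_le_max _ _ _ _
    _ ≤ |s - t| := by
        rw [sub_self, abs_zero, max_eq_left (abs_nonneg _)]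
        simpa using abs_max_sub_max_le_abs (s - a) (t - a) 0

lemma ramp_of_le {a d s : ℝ} (hd : 0 ≤ d) (h : s ≤ a) : ramp a d s = 0 := by
  rw [ramp, max_eq_right (by linarith), min_eq_left hd]

lemma ramp_of_add_le {a d s : ℝ} (h : a + d ≤ s) : ramp a d s = d := by
  rw [ramp, min_eq_right (le_max_of_le_left (by linarith))]

lemma ramp_add_ramp {a d e : ℝ} (hd : 0 ≤ d) (he : 0 ≤ e) (s : ℝ) :
    ramp a d s + ramp (a + d) e s = ramp a (d + e) s := by
  simp only [ramp, min_def, max_def]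
  split_ifs <;> linarith

lemma sum_ramp {a d : ℝ} (hd : 0 ≤ d) (s : ℝ) (k : ℕ) :
    ∑ j ∈ Finset.range k, ramp (a + j * d) d s = ramp a (k * d) s := by
  induction k with
  | zero => simp [ramp]
  | succ k ih =>
    rw [Finset.sum_range_succ, ih, ramp_add_ramp (by positivity) hd]
    push_cast
    ring_nf

lemma sum_sq_ramp_sub_le {d : ℝ} (hd : 0 ≤ d) (a s t : ℝ) (k : ℕ) :
    ∑ j ∈ Finset.range k, (ramp (a + j * d) d s - ramp (a + j * d) d t) ^ 2 ≤ (s - t) ^ 2 := by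
  wlog hts : t ≤ s generalizing s t
  · simpa only [sub_sq_comm s t, sub_sq_comm (ramp _ d s)] using this t s (le_of_not_ge hts)
  calc ∑ j ∈ Finset.range k, (ramp (a + j * d) d s - ramp (a + j * d) d t) ^ 2
      ≤ (∑ j ∈ Finset.range k, (ramp (a + j * d) d s - ramp (a + j * d) d t)) ^ 2 :=
        Finset.sum_sq_le_sq_sum_of_nonneg fun j _ => sub_nonneg.2 (ramp_mono hts)
    _ = (ramp a (k * d) s - ramp a (k * d) t) ^ 2 := by
        rw [Finset.sum_sub_distrib, sum_ramp hd, sum_ramp hd]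
    _ ≤ (s - t) ^ 2 := by
        have := (lipschitzWith_ramp a (k * d)).dist_le_mul s t
        simp only [NNReal.coe_one, one_mul, Real.dist_eq] at this
        exact sq_le_sq.2 (by simpa [abs_abs] using this)

lemma gagKer_nonneg (u : ℝ → ℝ) (p : ℝ × ℝ) : 0 ≤ gagKer u p := by
  unfold gagKer; positivity

lemma gagSq_nonneg (u : ℝ → ℝ) : 0 ≤ gagSq u := integral_nonneg (gagKer_nonneg u)

lemma measurable_gagKer {u : ℝ → ℝ} (hu : Measurable u) : Measurable (gagKer u) :=
  ((hu.comp measurable_fst).sub (hu.comp measurable_snd)).pow_const 2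
    |>.div ((measurable_fst.sub measurable_snd).abs.pow_const 2)

lemma gagKer_comp_le {φ : ℝ → ℝ} (hφ : LipschitzWith 1 φ) (u : ℝ → ℝ) (p : ℝ × ℝ) :
    gagKer (φ ∘ u) p ≤ gagKer u p := by
  have h := hφ.dist_le_mul (u p.1) (u p.2)
  simp only [NNReal.coe_one, one_mul, Real.dist_eq] at h
  exact div_le_div_of_nonneg_right (sq_le_sq.2 (by simpa using h)) (by positivity)

lemma integrable_gagKer_comp {φ : ℝ → ℝ} (hφ : LipschitzWith 1 φ) {u : ℝ → ℝ}
    (hu : Measurable u) (hker : Integrable (gagKer u)) : Integrable (gagKer (φ ∘ u)) := by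
  refine hker.mono' (measurable_gagKer (hφ.continuous.measurable.comp hu)).aestronglyMeasurable
    (ae_of_all _ fun p => ?_)
  rw [Real.norm_eq_abs, abs_of_nonneg (gagKer_nonneg _ _)]
  exact gagKer_comp_le hφ u p

def layer (u : ℝ → ℝ) (a d : ℝ) : ℝ → ℝ := fun x => ramp a d |u x|

lemma integrable_gagKer_layer {u : ℝ → ℝ} (hu : Measurable u) (hker : Integrable (gagKer u))
    (a d : ℝ) : Integrable (gagKer (layer u a d)) := by
  have habs : LipschitzWith 1 (fun s : ℝ => |s|) := .of_dist_le_mul fun s t => by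
    simpa [Real.dist_eq] using abs_abs_sub_abs_le_abs_sub s t
  exact integrable_gagKer_comp (φ := fun s => ramp a d |s|)
    (by simpa [Function.comp_def] using (lipschitzWith_ramp a d).comp habs) hu hker

lemma sum_gagKer_layer_le {d : ℝ} (hd : 0 ≤ d) (u : ℝ → ℝ) (a : ℝ) (k : ℕ) (p : ℝ × ℝ) :
    ∑ j ∈ Finset.range k, gagKer (layer u (a + j * d) d) p ≤ gagKer u p := by
  simp only [gagKer, layer, ← Finset.sum_div]
  refine div_le_div_of_nonneg_right ?_ (by positivity)
  calc _ ≤ (|u p.1| - |u p.2|) ^ 2 := sum_sq_ramp_sub_le hd a _ _ k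
    _ ≤ (u p.1 - u p.2) ^ 2 := sq_le_sq.2 (by simpa using abs_abs_sub_abs_le_abs_sub _ _)

lemma sum_gagSq_layer_le {u : ℝ → ℝ} (hu : Measurable u) (hker : Integrable (gagKer u))
    {d : ℝ} (hd : 0 ≤ d) (a : ℝ) (k : ℕ) :
    ∑ j ∈ Finset.range k, gagSq (layer u (a + j * d) d) ≤ gagSq u := by
  have hint := fun j : ℕ => integrable_gagKer_layer hu hker (a + j * d) d
  unfold gagSq
  rw [← integral_finsetSum _ fun j _ => hint j]
  exact integral_mono (integrable_finsetSum _ fun j _ => hint j) hker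
    (sum_gagKer_layer_le hd u a k)

lemma le_setLIntegral_div_sq_sub {B : Set ℝ} {m : ℝ} (hm : 0 < m)
    (hBc : volume Bᶜ ≤ ENNReal.ofReal m) (x : ℝ) {c : ℝ} (hc : 0 ≤ c) :
    ENNReal.ofReal (c / (4 * m)) ≤ ∫⁻ y in B, ENNReal.ofReal (c / (x - y) ^ 2) := by
  -- `B` meets the annulus `m ≤ |x - y| ≤ 2m`, of measure `2m`, in measure at least `m`
  set ann : Set ℝ := Icc (x + m) (x + 2 * m) ∪ Icc (x - 2 * m) (x - m)
  have hann : volume ann = ENNReal.ofReal m + ENNReal.ofReal m := by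
    rw [measure_union _ measurableSet_Icc, Real.volume_Icc, Real.volume_Icc]
    · ring_nf
    · exact Set.disjoint_left.2 fun y hy1 hy2 => by linarith [hy1.1, hy2.2]
  have hBann : ENNReal.ofReal m ≤ volume (B ∩ ann) := by
    have h : volume ann ≤ volume (B ∩ ann) + ENNReal.ofReal m :=
      calc volume ann ≤ volume (B ∩ ann) + volume Bᶜ :=
            (measure_mono fun y hy => by by_cases hyB : y ∈ B <;> simp [hyB, hy]).trans
              (measure_union_le _ _)
        _ ≤ volume (B ∩ ann) + ENNReal.ofReal m := by gcongr
    rw [hann] at h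
    exact ENNReal.le_of_add_le_add_right ENNReal.ofReal_ne_top h
  have hpt : ∀ y ∈ B ∩ ann,
      ENNReal.ofReal (c / (4 * m ^ 2)) ≤ ENNReal.ofReal (c / (x - y) ^ 2) := by
    rintro y ⟨-, hy⟩
    have hq : m ^ 2 ≤ (x - y) ^ 2 ∧ (x - y) ^ 2 ≤ 4 * m ^ 2 := by
      rcases hy with ⟨h1, h2⟩ | ⟨h1, h2⟩ <;> constructor <;> nlinarith
    exact ENNReal.ofReal_le_ofReal
      (div_le_div_of_nonneg_left hc ((by positivity : (0 : ℝ) < m ^ 2).trans_le hq.1) hq.2)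
  calc ENNReal.ofReal (c / (4 * m))
      = ENNReal.ofReal m * ENNReal.ofReal (c / (4 * m ^ 2)) := by
        rw [← ENNReal.ofReal_mul hm.le]
        congr 1
        field_simp
    _ ≤ volume (B ∩ ann) * ENNReal.ofReal (c / (4 * m ^ 2)) := mul_le_mul_left hBann _
    _ = ∫⁻ _ in B ∩ ann, ENNReal.ofReal (c / (4 * m ^ 2)) := by rw [setLIntegral_const, mul_comm]
    _ ≤ ∫⁻ y in B ∩ ann, ENNReal.ofReal (c / (x - y) ^ 2) := setLIntegral_mono (by fun_prop) hpt
    _ ≤ ∫⁻ y in B, ENNReal.ofReal (c / (x - y) ^ 2) := lintegral_mono_set inter_subset_left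

lemma volume_le_mul_gagSq {v : ℝ → ℝ} (hker : Integrable (gagKer v)) {A B : Set ℝ}
    (hA : MeasurableSet A) (hB : MeasurableSet B) {d m : ℝ} (hd : d ≠ 0) (hm : 0 < m)
    (hBc : volume Bᶜ ≤ ENNReal.ofReal m) (hvA : ∀ x ∈ A, v x = d) (hvB : ∀ y ∈ B, v y = 0) :
    volume A ≤ ENNReal.ofReal (4 * m / d ^ 2 * gagSq v) := by
  have hc : 0 < d ^ 2 / (4 * m) := by positivity
  have key : volume A * ENNReal.ofReal (d ^ 2 / (4 * m)) ≤ ENNReal.ofReal (gagSq v) :=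
    calc volume A * ENNReal.ofReal (d ^ 2 / (4 * m))
        = ∫⁻ _ in A, ENNReal.ofReal (d ^ 2 / (4 * m)) := by rw [setLIntegral_const, mul_comm]
      _ ≤ ∫⁻ x in A, ∫⁻ y in B, ENNReal.ofReal (d ^ 2 / (x - y) ^ 2) :=
          lintegral_mono fun x => le_setLIntegral_div_sq_sub hm hBc x (sq_nonneg d)
      _ = ∫⁻ x in A, ∫⁻ y in B, ENNReal.ofReal (gagKer v (x, y)) :=
          setLIntegral_congr_fun hA fun x hx => setLIntegral_congr_fun hB fun y hy => by
            simp only [gagKer, hvA x hx, hvB y hy, sub_zero, sq_abs]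
      _ = ∫⁻ p in A ×ˢ B, ENNReal.ofReal (gagKer v p) := by
          rw [Measure.volume_eq_prod, ← Measure.prod_restrict,
            lintegral_prod _ (by
              rw [Measure.prod_restrict]; exact hker.aemeasurable.ennreal_ofReal.restrict)]
      _ ≤ ∫⁻ p, ENNReal.ofReal (gagKer v p) := setLIntegral_le_lintegral _ _
      _ = ENNReal.ofReal (gagSq v) :=
          (ofReal_integral_eq_lintegral_ofReal hker (ae_of_all _ (gagKer_nonneg v))).symm
  calc volume A ≤ ENNReal.ofReal (gagSq v) / ENNReal.ofReal (d ^ 2 / (4 * m)) :=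
        (ENNReal.le_div_iff_mul_le (Or.inl (ENNReal.ofReal_pos.2 hc).ne')
          (Or.inl ENNReal.ofReal_ne_top)).2 key
    _ = ENNReal.ofReal (4 * m / d ^ 2 * gagSq v) := by
        rw [← ENNReal.ofReal_div_of_pos hc]
        congr 1
        field_simp

lemma volume_abs_ge_le_integral_sq {u : ℝ → ℝ} (hL2 : Integrable (fun x => u x ^ 2)) {t : ℝ}
    (ht : 1 ≤ t) : volume {x | t ≤ |u x|} ≤ ENNReal.ofReal (∫ x, u x ^ 2) :=
  calc volume {x | t ≤ |u x|} ≤ 1 * volume {x | 1 ≤ ENNReal.ofReal (u x ^ 2)} := by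
        rw [one_mul]
        refine measure_mono fun x (hx : t ≤ |u x|) => ENNReal.one_le_ofReal.2 ?_
        nlinarith [sq_abs (u x)]
    _ ≤ ∫⁻ x, ENNReal.ofReal (u x ^ 2) :=
        mul_meas_ge_le_lintegral₀ hL2.aemeasurable.ennreal_ofReal 1
    _ = ENNReal.ofReal (∫ x, u x ^ 2) :=
        (ofReal_integral_eq_lintegral_ofReal hL2 (ae_of_all _ fun x => sq_nonneg _)).symm

lemma volume_abs_ge_add_nat_mul_le {u : ℝ → ℝ} (hu : Measurable u) (hker : Integrable (gagKer u))
    {a d M : ℝ} (hd : 0 < d) (hM : 0 ≤ M) (h0 : volume {x | a ≤ |u x|} ≤ ENNReal.ofReal M)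
    (j : ℕ) : volume {x | a + j * d ≤ |u x|} ≤
      ENNReal.ofReal (M * ∏ i ∈ Finset.range j, 4 / d ^ 2 * gagSq (layer u (a + i * d) d)) := by
  induction j with
  | zero => simpa using h0
  | succ j ih =>
    set P := M * ∏ i ∈ Finset.range j, 4 / d ^ 2 * gagSq (layer u (a + i * d) d)
    have hP : 0 ≤ P := mul_nonneg hM <| Finset.prod_nonneg fun i _ =>
      mul_nonneg (by positivity) (gagSq_nonneg _)
    have hstep : volume {x | a + ((j + 1 : ℕ) : ℝ) * d ≤ |u x|} ≤
        ENNReal.ofReal (P * (4 / d ^ 2 * gagSq (layer u (a + j * d) d))) := by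
      have hsub : {x | a + ((j + 1 : ℕ) : ℝ) * d ≤ |u x|} ⊆ {x | a + j * d ≤ |u x|} :=
        fun x (hx : a + ((j + 1 : ℕ) : ℝ) * d ≤ |u x|) => show a + j * d ≤ |u x| by
          push_cast at hx; linarith
      rcases hP.eq_or_lt with hP0 | hPpos
      · rw [← hP0, zero_mul]
        exact (measure_mono hsub).trans (ih.trans_eq (by rw [← hP0]))
      have hBc : {x | |u x| ≤ a + j * d}ᶜ ⊆ {x | a + j * d ≤ |u x|} :=
        fun x (hx : ¬|u x| ≤ a + j * d) => (not_le.1 hx).le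
      have hA : ∀ x ∈ {x | a + ((j + 1 : ℕ) : ℝ) * d ≤ |u x|}, layer u (a + j * d) d x = d :=
        fun x (hx : a + ((j + 1 : ℕ) : ℝ) * d ≤ |u x|) =>
          ramp_of_add_le (by push_cast at hx; linarith)
      refine (volume_le_mul_gagSq (integrable_gagKer_layer hu hker _ d)
        (measurableSet_le measurable_const hu.abs) (measurableSet_le hu.abs measurable_const)
        hd.ne' hPpos ((measure_mono hBc).trans ih) hA (fun y hy => ramp_of_le hd.le hy)).trans_eq
        (by congr 1; ring)
    rwa [Finset.prod_range_succ, ← mul_assoc]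

lemma prod_le_exp_sum_sub_one {ι : Type*} (s : Finset ι) {r : ι → ℝ} (hr : ∀ i ∈ s, 0 ≤ r i) :
    ∏ i ∈ s, r i ≤ exp (∑ i ∈ s, (r i - 1)) := by
  rw [Real.exp_sum]
  exact Finset.prod_le_prod hr fun i _ => by linarith [Real.add_one_le_exp (r i - 1)]

lemma volume_abs_ge_add_le {u : ℝ → ℝ} (hu : Measurable u) (hker : Integrable (gagKer u))
    {S : ℝ} (hS : gagSq u ≤ S) {a t M : ℝ} (ht : 0 < t) (hM : 0 ≤ M)
    (h0 : volume {x | a ≤ |u x|} ≤ ENNReal.ofReal M) {k : ℕ} (hk : 0 < k) :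
    volume {x | a + t ≤ |u x|} ≤ ENNReal.ofReal (M * exp (4 * S * k ^ 2 / t ^ 2 - k)) := by
  set d := t / k
  have hk' : (0 : ℝ) < k := Nat.cast_pos.2 hk
  have hd : 0 < d := div_pos ht hk'
  have hkd : (k : ℝ) * d = t := mul_div_cancel₀ t hk'.ne'
  have hchain := volume_abs_ge_add_nat_mul_le hu hker hd hM h0 k
  rw [hkd] at hchain
  refine hchain.trans (ENNReal.ofReal_le_ofReal (mul_le_mul_of_nonneg_left ?_ hM))
  have hsum : 4 / d ^ 2 * ∑ i ∈ Finset.range k, gagSq (layer u (a + i * d) d) ≤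
      4 * S * k ^ 2 / t ^ 2 :=
    calc _ ≤ 4 / d ^ 2 * S := by gcongr; exact (sum_gagSq_layer_le hu hker hd.le a k).trans hS
      _ = 4 * S * k ^ 2 / t ^ 2 := by rw [← hkd]; field_simp
  calc _ ≤ exp (∑ i ∈ Finset.range k, (4 / d ^ 2 * gagSq (layer u (a + i * d) d) - 1)) :=
        prod_le_exp_sum_sub_one _ fun i _ =>
          mul_nonneg (by positivity) (gagSq_nonneg _)
    _ ≤ exp (4 * S * k ^ 2 / t ^ 2 - k) := by
        rw [Finset.sum_sub_distrib, ← Finset.mul_sum]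
        simpa using hsum

lemma volume_abs_ge_le_exp_neg_sq {u : ℝ → ℝ} (hu : memH u) (hS : gagSq u ≤ 2 * π) {t : ℝ}
    (ht : 0 < t) (ht' : 32 * π ≤ t ^ 2) :
    volume {x | 1 + t ≤ |u x|} ≤ ENNReal.ofReal ((∫ x, u x ^ 2) * exp (-t ^ 2 / (64 * π))) := by
  obtain ⟨hmeas, hL2, hker⟩ := hu
  -- `k ≈ t² / (16π)` layers of width `t / k` balance the exponent `8πk²/t² - k`
  set L := t ^ 2 / (16 * π)
  have hL : 2 ≤ L := by rw [le_div_iff₀ (by positivity)]; linarith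
  set k := ⌈L⌉₊
  have hLk : L ≤ k := Nat.le_ceil L
  have hkL : (k : ℝ) < L + 1 := Nat.ceil_lt_add_one (by positivity)
  refine (volume_abs_ge_add_le hmeas hker hS ht (integral_nonneg fun x => sq_nonneg _)
    (volume_abs_ge_le_integral_sq hL2 le_rfl) (k := k)
    (Nat.ceil_pos.2 (by positivity : (0 : ℝ) < L))).trans
    (ENNReal.ofReal_le_ofReal (mul_le_mul_of_nonneg_left (exp_le_exp.2 ?_)
      (integral_nonneg fun x => sq_nonneg _)))
  have hexp : 4 * (2 * π) * (k : ℝ) ^ 2 / t ^ 2 = k ^ 2 / (2 * L) := by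
    simp only [L]; field_simp; ring
  have hrhs : -t ^ 2 / (64 * π) = -(L / 4) := by simp only [L]; field_simp; ring
  have hsq : (k : ℝ) ^ 2 / (2 * L) ≤ 3 * k / 4 := by
    rw [div_le_iff₀ (by positivity)]; nlinarith
  rw [hexp, hrhs]
  linarith

lemma exp_sub_one_le_mul_exp (s : ℝ) : exp s - 1 ≤ s * exp s := by
  have h := mul_le_mul_of_nonneg_right (Real.add_one_le_exp (-s)) (exp_pos s).le
  rw [← exp_add, neg_add_cancel, exp_zero] at h
  linarith

lemma setLIntegral_exp_mul_sq_sub_one_le {u : ℝ → ℝ} (hL2 : Integrable (fun x => u x ^ 2))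
    {α : ℝ} (hα : 0 ≤ α) (R : ℝ) :
    ∫⁻ x in {x | |u x| < R}, ENNReal.ofReal (exp (α * u x ^ 2) - 1) ≤
      ENNReal.ofReal (α * exp (α * R ^ 2) * ∫ x, u x ^ 2) := by
  have hpt : ∀ x ∈ {x | |u x| < R},
      ENNReal.ofReal (exp (α * u x ^ 2) - 1) ≤ ENNReal.ofReal (α * exp (α * R ^ 2) * u x ^ 2) := by
    intro x (hx : |u x| < R)
    have hsq : u x ^ 2 ≤ R ^ 2 := by nlinarith [sq_abs (u x), abs_nonneg (u x)]
    refine ENNReal.ofReal_le_ofReal ((exp_sub_one_le_mul_exp _).trans ?_)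
    calc α * u x ^ 2 * exp (α * u x ^ 2) ≤ α * u x ^ 2 * exp (α * R ^ 2) := by gcongr
      _ = α * exp (α * R ^ 2) * u x ^ 2 := by ring
  calc _ ≤ ∫⁻ x in {x | |u x| < R}, ENNReal.ofReal (α * exp (α * R ^ 2) * u x ^ 2) :=
        setLIntegral_mono_ae (hL2.aemeasurable.const_mul _).ennreal_ofReal.restrict
          (ae_of_all _ hpt)
    _ ≤ ∫⁻ x, ENNReal.ofReal (α * exp (α * R ^ 2) * u x ^ 2) := setLIntegral_le_lintegral _ _
    _ = ENNReal.ofReal (α * exp (α * R ^ 2) * ∫ x, u x ^ 2) := by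
        rw [← integral_const_mul, ofReal_integral_eq_lintegral_ofReal (hL2.const_mul _)
          (ae_of_all _ fun x => by positivity)]

lemma setLIntegral_abs_ge_le_tsum (u : ℝ → ℝ) {F : ℝ → ℝ≥0∞} (hF : MonotoneOn F (Ici 0))
    {R : ℝ} (hR : 0 ≤ R) :
    ∫⁻ x in {x | R ≤ |u x|}, F |u x| ≤
      ∑' m : ℕ, volume {x | R + m ≤ |u x|} * F (R + m + 1) := by
  set E : ℕ → Set ℝ := fun m => {x | R + m ≤ |u x| ∧ |u x| ≤ R + m + 1}
  have hcover : {x | R ≤ |u x|} ⊆ ⋃ m, E m := fun x (hx : R ≤ |u x|) => by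
    refine mem_iUnion.2 ⟨⌊|u x| - R⌋₊, ?_, ?_⟩
    · linarith [Nat.floor_le (sub_nonneg.2 hx)]
    · linarith [Nat.lt_floor_add_one (|u x| - R)]
  have hshell : ∀ m, ∫⁻ x in E m, F |u x| ≤ volume {x | R + m ≤ |u x|} * F (R + m + 1) := by
    intro m
    calc ∫⁻ x in E m, F |u x| ≤ ∫⁻ _ in E m, F (R + m + 1) :=
          setLIntegral_mono measurable_const fun x hx =>
            hF (mem_Ici.2 (abs_nonneg _)) (mem_Ici.2 (by positivity)) hx.2
      _ = volume (E m) * F (R + m + 1) := by rw [setLIntegral_const, mul_comm]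
      _ ≤ volume {x | R + m ≤ |u x|} * F (R + m + 1) := by
          gcongr
          exact fun x hx => hx.1
  calc _ ≤ ∫⁻ x in ⋃ m, E m, F |u x| := lintegral_mono_set hcover
    _ ≤ ∑' m, ∫⁻ x in E m, F |u x| := lintegral_iUnion_le _ _
    _ ≤ _ := ENNReal.tsum_le_tsum hshell

lemma exp_neg_sq_mul_exp_le {α : ℝ} (hα : α ≤ 1 / (256 * π)) (m : ℕ) :
    exp (-((11 : ℝ) + m) ^ 2 / (64 * π)) * exp (α * (12 + m + 1) ^ 2) ≤
      exp (-1 / (128 * π)) ^ m := by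
  rw [← exp_add, ← exp_nat_mul, exp_le_exp]
  have hm : (0 : ℝ) ≤ m := m.cast_nonneg
  have h1 : α * (12 + m + 1) ^ 2 ≤ (11 + m) ^ 2 / (128 * π) :=
    calc α * (12 + m + 1) ^ 2 ≤ 1 / (256 * π) * (2 * (11 + m) ^ 2) :=
          mul_le_mul hα (by nlinarith) (by positivity) (by positivity)
      _ = (11 + m) ^ 2 / (128 * π) := by ring
  have h2 : (m : ℝ) / (128 * π) ≤ (11 + m) ^ 2 / (128 * π) := by gcongr; nlinarith
  have h3 : -((11 : ℝ) + m) ^ 2 / (64 * π) = -(2 * ((11 + m) ^ 2 / (128 * π))) := by ring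
  have h4 : (m : ℝ) * (-1 / (128 * π)) = -(m / (128 * π)) := by ring
  rw [h3, h4]
  linarith

lemma lintegral_exp_mul_sq_sub_one_le {u : ℝ → ℝ} (hu : memH u) (hS : gagSq u ≤ 2 * π) {α : ℝ}
    (hα : 0 ≤ α) (hαω : α ≤ 1 / (256 * π)) :
    ∫⁻ x, ENNReal.ofReal (exp (α * u x ^ 2) - 1) ≤
      ENNReal.ofReal ((α * exp (α * 12 ^ 2) + (1 - exp (-1 / (128 * π)))⁻¹) * ∫ x, u x ^ 2) := by
  have hL2 := hu.2.1
  set I := ∫ x, u x ^ 2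
  have hI : 0 ≤ I := integral_nonneg fun x => sq_nonneg _
  set q := exp (-1 / (128 * π))
  have hq1 : q < 1 := exp_lt_one_iff.2 (div_neg_of_neg_of_pos (by norm_num) (by positivity))
  set F : ℝ → ℝ≥0∞ := fun s => ENNReal.ofReal (exp (α * s ^ 2) - 1)
  have hF : MonotoneOn F (Ici 0) := fun s hs t _ hst => ENNReal.ofReal_le_ofReal <|
    sub_le_sub_right (exp_le_exp.2 (mul_le_mul_of_nonneg_left (pow_le_pow_left₀ hs hst 2) hα)) 1
  have hsplit : ∫⁻ x, ENNReal.ofReal (exp (α * u x ^ 2) - 1) =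
      (∫⁻ x in {x | 12 ≤ |u x|}, F |u x|) +
        ∫⁻ x in {x | |u x| < 12}, ENNReal.ofReal (exp (α * u x ^ 2) - 1) := by
    have hcompl : {x | 12 ≤ |u x|}ᶜ = {x | |u x| < 12} := by ext; simp
    rw [← lintegral_add_compl _ (measurableSet_le measurable_const hu.1.abs), hcompl]
    simp only [F, sq_abs]
  have hshell : ∀ m : ℕ,
      volume {x | 12 + m ≤ |u x|} * F (12 + m + 1) ≤ ENNReal.ofReal (I * q ^ m) := by
    intro m
    have hvol := volume_abs_ge_le_exp_neg_sq hu hS (t := 11 + m) (by positivity)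
      (by nlinarith [pi_lt_d2, m.cast_nonneg (α := ℝ)])
    rw [show (1 : ℝ) + (11 + m) = 12 + m by ring] at hvol
    calc volume {x | 12 + m ≤ |u x|} * F (12 + m + 1)
        ≤ ENNReal.ofReal (I * exp (-((11 : ℝ) + m) ^ 2 / (64 * π))) *
            ENNReal.ofReal (exp (α * (12 + m + 1) ^ 2)) :=
          mul_le_mul' hvol (ENNReal.ofReal_le_ofReal (sub_le_self _ zero_le_one))
      _ ≤ ENNReal.ofReal (I * q ^ m) := by
          rw [← ENNReal.ofReal_mul (by positivity), mul_assoc]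
          exact ENNReal.ofReal_le_ofReal
            (mul_le_mul_of_nonneg_left (exp_neg_sq_mul_exp_le hαω m) hI)
  have htail : ∫⁻ x in {x | 12 ≤ |u x|}, F |u x| ≤ ENNReal.ofReal (I * (1 - q)⁻¹) :=
    calc _ ≤ ∑' m : ℕ, volume {x | 12 + m ≤ |u x|} * F (12 + m + 1) :=
          setLIntegral_abs_ge_le_tsum u hF (by norm_num)
      _ ≤ ∑' m : ℕ, ENNReal.ofReal (I * q ^ m) := ENNReal.tsum_le_tsum hshell
      _ = ENNReal.ofReal (I * (1 - q)⁻¹) := by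
          rw [← ENNReal.ofReal_tsum_of_nonneg (fun m => by positivity)
            ((summable_geometric_of_lt_one (exp_pos _).le hq1).mul_left I),
            tsum_mul_left, tsum_geometric_of_lt_one (exp_pos _).le hq1]
  rw [hsplit]
  refine (add_le_add htail (setLIntegral_exp_mul_sq_sub_one_le hL2 hα 12)).trans_eq ?_
  rw [← ENNReal.ofReal_add (mul_nonneg hI (inv_nonneg.2 (by linarith))) (by positivity)]
  congr 1
  simp only [I]
  ring

/-- Ozawa's fractional Trudinger–Moser inequality (Theorem 2.1).
Note `[u] ≤ √(2π)` is equivalent to `‖(-Δ)^{1/4} u‖_{L²(ℝ)} ≤ 1`. -/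
theorem statement4 :
    ∃ ω : ℝ, 0 < ω ∧ ω ≤ π ∧ ∀ α : ℝ, 0 < α → α < ω →
      ∃ H : ℝ, 0 < H ∧ ∀ u : ℝ → ℝ, memH u → gagNorm u ≤ Real.sqrt (2 * π) →
        (∫⁻ x : ℝ, ENNReal.ofReal (exp (α * (u x) ^ 2) - 1)) ≤
          ENNReal.ofReal (H * ∫ x : ℝ, (u x) ^ 2) := by
  have hq1 : exp (-1 / (128 * π)) < 1 :=
    exp_lt_one_iff.2 (div_neg_of_neg_of_pos (by norm_num) (by positivity))
  refine ⟨1 / (256 * π), by positivity, ?_, fun α hα hαω => ⟨_, ?_, fun u hu hnorm =>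
    lintegral_exp_mul_sq_sub_one_le hu ((Real.sqrt_le_sqrt_iff (by positivity)).1 hnorm) hα.le
      hαω.le⟩⟩
  · rw [div_le_iff₀ (by positivity)]
    nlinarith [pi_gt_three]
  · exact add_pos (by positivity) (inv_pos.2 (sub_pos.2 hq1))
end
end

section
/- Let f : ℝ → ℝ be continuous with F(t) = ∫₀^t f(τ) dτ, and suppose there exist t₀, M > 0 such that 0 < F(t) ≤ M|f(t)| for all |t| ≥ t₀ and 0 < 2F(t) ≤ f(t)t for all t ≠ 0. Then for every ε > 0 there exists t_ε > 0 such that F(t) ≤ ε f(t) t for all |t| ≥ t_ε. -/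
/-! Take `tε = max t₀ (M / ε)`: there `F(t) ≤ M |f(t)| ≤ ε |t| |f(t)| = ε f(t) t`, the last step
because `f(t) t ≥ 2 F(t) > 0`. -/

open MeasureTheory Real Set Filter Topology

noncomputable section

theorem le_mul_mul_of_le_mul_abs {α : Type*} [CommRing α] [LinearOrder α] [IsStrictOrderedRing α]
    {a b t M ε : α} (ha : a ≤ M * |b|) (hbt : 0 ≤ b * t) (hM : M ≤ ε * |t|) :
    a ≤ ε * (b * t) :=
  calc a ≤ M * |b| := ha
    _ ≤ ε * |t| * |b| := mul_le_mul_of_nonneg_right hM (abs_nonneg b)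
    _ = ε * |b * t| := by rw [abs_mul]; ring
    _ = ε * (b * t) := by rw [abs_of_nonneg hbt]

theorem statement15_general (f : ℝ → ℝ)
    (t₀ M : ℝ) (ht₀ : 0 < t₀)
    (h1 : ∀ t : ℝ, t₀ ≤ |t| → 0 < primF f t ∧ primF f t ≤ M * |f t|)
    (h2 : ∀ t : ℝ, t ≠ 0 → 0 < 2 * primF f t ∧ 2 * primF f t ≤ f t * t) :
    ∀ ε : ℝ, 0 < ε → ∃ tε : ℝ, 0 < tε ∧
      ∀ t : ℝ, tε ≤ |t| → primF f t ≤ ε * (f t * t) := by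
  intro ε hε
  refine ⟨max t₀ (M / ε), lt_max_of_lt_left ht₀, fun t ht => ?_⟩
  have ht₀t : t₀ ≤ |t| := (le_max_left _ _).trans ht
  have ht_ne : t ≠ 0 := abs_pos.mp (ht₀.trans_le ht₀t)
  have hft : 0 ≤ f t * t := ((h2 t ht_ne).1.trans_le (h2 t ht_ne).2).le
  have hM_le : M ≤ ε * |t| := by
    rw [mul_comm, ← div_le_iff₀ hε]
    exact (le_max_right _ _).trans ht
  exact le_mul_mul_of_le_mul_abs (h1 t ht₀t).2 hft hM_le

/-- `F(t) ≤ ε f(t) t` for `|t|` large (inequality (3.3)). -/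
theorem statement15 (f : ℝ → ℝ) (hf : Continuous f)
    (t₀ M : ℝ) (ht₀ : 0 < t₀) (hM : 0 < M)
    (h1 : ∀ t : ℝ, t₀ ≤ |t| → 0 < primF f t ∧ primF f t ≤ M * |f t|)
    (h2 : ∀ t : ℝ, t ≠ 0 → 0 < 2 * primF f t ∧ 2 * primF f t ≤ f t * t) :
    ∀ ε : ℝ, 0 < ε → ∃ tε : ℝ, 0 < tε ∧
      ∀ t : ℝ, tε ≤ |t| → primF f t ≤ ε * (f t * t) :=
  statement15_general f t₀ M ht₀ h1 h2
end
end

section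
/- Fix 1 < q < 2 and 0 < μ < λ₁/(2π). Define f : ℝ → ℝ by f(t) = μt for 0 ≤ t ≤ 1, f(t) = μ t^{q−1} e^{t^q − 1} for t > 1, and f(t) = −f(−t) for t < 0. Then f is continuous, odd, f(0) = 0, and f satisfies hypotheses (H): there exist t₀, M > 0 such that (i) 0 < F(t) ≤ M|f(t)| for all |t| ≥ t₀; (ii) 0 < 2F(t) ≤ f(t)t for all t ≠ 0; (iii) limsup_{t→0} F(t)/t² < λ₁/(4π); (iv) lim_{|t|→∞} |f(t)| e^{−α t²} = 0 for every α > 0; where F(t) = ∫₀^t f(τ) dτ. -/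
open MeasureTheory Real Set Filter Topology

noncomputable section

/-- The nonlinearity of Example 3.4: `f(t) = μ t` for `0 ≤ t ≤ 1`,
`f(t) = μ t^{q-1} e^{t^q - 1}` for `t > 1`, odd extension for `t < 0`. -/
def fSub (μ q : ℝ) : ℝ → ℝ := fun t =>
  if 0 ≤ t then (if t ≤ 1 then μ * t else μ * t ^ (q - 1) * exp (t ^ q - 1))
  else -(if -t ≤ 1 then μ * (-t) else μ * (-t) ^ (q - 1) * exp ((-t) ^ q - 1))


/-! `F` is explicit and even: `F(t) = μ t² / 2` for `|t| ≤ 1` and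
`F(t) = μ / 2 + (μ / q) (e^s - 1)` with `s = t^q - 1` for `t ≥ 1`. Near `0` this gives
`F(t)/t² = μ/2 < λ₁/(4π)`. For `t ≥ 1`, `1/q ≤ 1` gives `2F(t) ≤ μ(2e^s - 1)`, which is
at most `2|f(t)|`, and at most `f(t) t = μ(s + 1)e^s` because `(1 - s)e^s ≤ 1`.
Finally `q < 2` makes `|f(t)| ≤ |μ| e^{2t^q} = e^{o(t²)}`, which any Gaussian weight beats. -/

theorem one_sub_mul_exp_le_one (x : ℝ) : (1 - x) * exp x ≤ 1 :=
  calc (1 - x) * exp x ≤ exp (-x) * exp x :=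
        mul_le_mul_of_nonneg_right (one_sub_le_exp_neg x) (exp_pos x).le
    _ = 1 := by rw [← exp_add, neg_add_cancel, exp_zero]

theorem one_le_exp_rpow_sub_one {q t : ℝ} (hq : 0 ≤ q) (ht : 1 ≤ t) : 1 ≤ exp (t ^ q - 1) :=
  one_le_exp (by linarith [one_le_rpow ht hq])

theorem primF_neg_of_odd {f : ℝ → ℝ} (hf : f.Odd) (t : ℝ) : primF f (-t) = primF f t := by
  have h := intervalIntegral.integral_comp_neg (a := 0) (b := t) f
  simp only [hf.eq, intervalIntegral.integral_neg, neg_zero] at h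
  rw [primF, primF, ← neg_neg (∫ x in (0 : ℝ)..-t, f x), ← intervalIntegral.integral_symm,
    ← h, neg_neg]

theorem primF_abs_of_odd {f : ℝ → ℝ} (hf : f.Odd) (t : ℝ) : primF f |t| = primF f t := by
  rcases abs_choice t with h | h <;> rw [h]
  exact primF_neg_of_odd hf t

theorem Function.Even.tendsto_cocompact_of_atTop {α : Type*} {g : ℝ → α} {l : Filter α}
    (hg : g.Even) (h : Tendsto g atTop l) : Tendsto g (cocompact ℝ) l := by
  rw [cocompact_eq_atBot_atTop]
  exact tendsto_sup.2 ⟨(h.comp tendsto_neg_atBot_atTop).congr hg.eq, h⟩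

section fSub

variable {μ q t : ℝ}

theorem fSub_odd (μ q : ℝ) : (fSub μ q).Odd := by
  intro t
  rcases lt_trichotomy t 0 with ht | rfl | ht
  · simp [fSub, ht.le, not_le.2 ht]
  · simp [fSub]
  · simp [fSub, ht.le, not_le.2 (neg_neg_of_pos ht)]

theorem fSub_of_le_one (h0 : 0 ≤ t) (h1 : t ≤ 1) : fSub μ q t = μ * t := by
  simp [fSub, h0, h1]

theorem fSub_of_one_le (ht : 1 ≤ t) : fSub μ q t = μ * t ^ (q - 1) * exp (t ^ q - 1) := by
  rcases ht.eq_or_lt with rfl | ht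
  · simp [fSub]
  · simp [fSub, (zero_lt_one.trans ht).le, not_le.2 ht]

theorem continuous_fSub (hq : 1 ≤ q) : Continuous (fSub μ q) := by
  have hpos : Continuous fun t : ℝ =>
      if t ≤ 1 then μ * t else μ * t ^ (q - 1) * exp (t ^ q - 1) := by
    refine Continuous.if_le (by fun_prop) ?_ continuous_id continuous_const
      (fun t ht => by simp [ht])
    have := continuous_rpow_const (by linarith : (0 : ℝ) ≤ q - 1)
    have := continuous_rpow_const (by linarith : (0 : ℝ) ≤ q)
    fun_prop
  exact Continuous.if_le hpos (hpos.comp continuous_neg).neg continuous_const continuous_id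
    (fun t ht => by simp [← ht])

theorem primF_fSub_of_le_one (h0 : 0 ≤ t) (h1 : t ≤ 1) :
    primF (fSub μ q) t = μ * t ^ 2 / 2 := by
  rw [primF, intervalIntegral.integral_congr (g := fun x => μ * x) fun x hx => by
    rw [uIcc_of_le h0] at hx; exact fSub_of_le_one hx.1 (hx.2.trans h1)]
  rw [intervalIntegral.integral_const_mul, integral_id]
  ring

theorem primF_fSub_of_abs_le_one (ht : |t| ≤ 1) : primF (fSub μ q) t = μ * t ^ 2 / 2 := by
  rw [← primF_abs_of_odd (fSub_odd μ q), primF_fSub_of_le_one (abs_nonneg t) ht, sq_abs]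

theorem primF_fSub_of_one_le (hq : 1 ≤ q) (ht : 1 ≤ t) :
    primF (fSub μ q) t = μ / 2 + μ / q * (exp (t ^ q - 1) - 1) := by
  have hcont := continuous_fSub (μ := μ) hq
  have hderiv : ∀ x ∈ uIcc 1 t,
      HasDerivAt (fun y => μ / q * exp (y ^ q - 1)) (fSub μ q x) x := by
    intro x hx
    rw [uIcc_of_le ht] at hx
    have hx0 : x ≠ 0 := by linarith [hx.1]
    rw [fSub_of_one_le hx.1]
    refine ((((hasDerivAt_rpow_const (p := q) (Or.inl hx0)).sub_const 1).exp).const_mul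
      (μ / q)).congr_deriv ?_
    field_simp
  rw [primF, ← intervalIntegral.integral_add_adjacent_intervals (hcont.intervalIntegrable 0 1)
      (hcont.intervalIntegrable 1 t), ← primF, primF_fSub_of_le_one zero_le_one le_rfl,
    intervalIntegral.integral_eq_sub_of_hasDerivAt hderiv (hcont.intervalIntegrable 1 t)]
  simp only [one_rpow, sub_self, exp_zero]
  ring

theorem two_mul_primF_fSub_le (hμ : 0 ≤ μ) (hq : 1 ≤ q) (ht : 1 ≤ t) :
    2 * primF (fSub μ q) t ≤ μ * (2 * exp (t ^ q - 1) - 1) := by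
  have hE := one_le_exp_rpow_sub_one (by linarith : 0 ≤ q) ht
  have hμq : μ / q ≤ μ := div_le_self hμ hq
  rw [primF_fSub_of_one_le hq ht]
  nlinarith

theorem two_mul_primF_fSub_bounds_of_pos (hμ : 0 < μ) (hq : 1 ≤ q) (ht : 0 < t) :
    0 < 2 * primF (fSub μ q) t ∧ 2 * primF (fSub μ q) t ≤ fSub μ q t * t := by
  rcases le_or_gt t 1 with h1 | h1
  · rw [primF_fSub_of_le_one ht.le h1, fSub_of_le_one ht.le h1]
    constructor <;> nlinarith [mul_pos hμ (mul_pos ht ht)]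
  · have hE := one_le_exp_rpow_sub_one (by linarith : 0 ≤ q) h1.le
    have hq0 : 0 < μ / q := by positivity
    refine ⟨by rw [primF_fSub_of_one_le hq h1.le]; nlinarith, ?_⟩
    have hkey := one_sub_mul_exp_le_one (t ^ q - 1)
    have hpow : t ^ (q - 1) * t = t ^ q := by rw [← rpow_add_one (by linarith), sub_add_cancel]
    calc 2 * primF (fSub μ q) t ≤ μ * (2 * exp (t ^ q - 1) - 1) :=
          two_mul_primF_fSub_le hμ.le hq h1.le
      _ ≤ μ * (t ^ q * exp (t ^ q - 1)) := by gcongr; linarith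
      _ = fSub μ q t * t := by rw [fSub_of_one_le h1.le, ← hpow]; ring

theorem primF_fSub_le_abs_of_one_le (hμ : 0 < μ) (hq : 1 ≤ q) (ht : 1 ≤ t) :
    primF (fSub μ q) t ≤ |fSub μ q t| := by
  have hF := two_mul_primF_fSub_le hμ.le hq ht
  have hpow : 1 ≤ t ^ (q - 1) := one_le_rpow ht (by linarith)
  have hE := exp_pos (t ^ q - 1)
  rw [fSub_of_one_le ht, abs_of_pos (by positivity)]
  nlinarith [mul_le_mul_of_nonneg_left hpow (mul_pos hμ hE).le]

theorem limsup_primF_fSub_div_sq :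
    limsup (fun t => primF (fSub μ q) t / t ^ 2) (𝓝[≠] 0) = μ / 2 := by
  have hev : ∀ᶠ t in 𝓝[≠] (0 : ℝ), primF (fSub μ q) t / t ^ 2 = μ / 2 := by
    filter_upwards [nhdsWithin_le_nhds (Icc_mem_nhds (by norm_num : (-1 : ℝ) < 0) one_pos),
      self_mem_nhdsWithin] with t ht ht0
    have ht0 : t ≠ 0 := ht0
    rw [primF_fSub_of_abs_le_one (abs_le.2 ht)]
    field_simp
  rw [limsup_congr hev, limsup_const]

theorem tendsto_abs_fSub_mul_exp_atTop (hq : q < 2) {α : ℝ} (hα : 0 < α) :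
    Tendsto (fun t => |fSub μ q t| * exp (-α * t ^ 2)) atTop (𝓝 0) := by
  have hexponent : Tendsto (fun t : ℝ => 2 * t ^ q - α * t ^ 2) atTop atBot := by
    have hsmall : Tendsto (fun t : ℝ => 2 * t ^ (q - 2) - α) atTop (𝓝 (-α)) := by
      simpa [neg_sub] using
        ((tendsto_rpow_neg_atTop (by linarith : 0 < 2 - q)).const_mul 2).sub_const α
    refine ((tendsto_pow_atTop two_ne_zero).atTop_mul_neg (by linarith) hsmall).congr' ?_
    filter_upwards [eventually_gt_atTop 0] with t ht
    rw [rpow_sub ht, rpow_two]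
    field_simp
  have hbound : Tendsto (fun t => |μ| * exp (2 * t ^ q - α * t ^ 2)) atTop (𝓝 0) := by
    simpa using (tendsto_exp_atBot.comp hexponent).const_mul |μ|
  refine squeeze_zero' (Eventually.of_forall fun t => by positivity) ?_ hbound
  filter_upwards [eventually_ge_atTop 1] with t ht
  have hpow : t ^ (q - 1) ≤ exp (t ^ q) :=
    (rpow_le_rpow_of_exponent_le ht (by linarith : q - 1 ≤ q)).trans
      (by linarith [add_one_le_exp (t ^ q)])
  calc |fSub μ q t| * exp (-α * t ^ 2)
      = |μ| * t ^ (q - 1) * exp (t ^ q - 1 - α * t ^ 2) := by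
        rw [fSub_of_one_le ht, abs_mul, abs_mul, abs_of_pos (rpow_pos_of_pos (by linarith) _),
          abs_of_pos (exp_pos _), mul_assoc _ (exp _), ← exp_add]
        ring_nf
    _ ≤ |μ| * exp (t ^ q) * exp (t ^ q - α * t ^ 2) := by gcongr; linarith
    _ = |μ| * exp (2 * t ^ q - α * t ^ 2) := by rw [mul_assoc, ← exp_add]; ring_nf

theorem tendsto_abs_fSub_mul_exp_cocompact (hq : q < 2) {α : ℝ} (hα : 0 < α) :
    Tendsto (fun t => |fSub μ q t| * exp (-α * t ^ 2)) (cocompact ℝ) (𝓝 0) :=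
  Function.Even.tendsto_cocompact_of_atTop
    (fun t => by simp only [(fSub_odd μ q).eq, abs_neg, neg_sq])
    (tendsto_abs_fSub_mul_exp_atTop hq hα)

theorem primF_fSub_pos_and_le_abs (hμ : 0 < μ) (hq : 1 ≤ q) (ht : 1 ≤ |t|) :
    0 < primF (fSub μ q) t ∧ primF (fSub μ q) t ≤ |fSub μ q t| := by
  have habs : |fSub μ q (abs t)| = |fSub μ q t| := by
    rcases abs_choice t with h | h <;> simp [h, (fSub_odd μ q).eq]
  rw [← primF_abs_of_odd (fSub_odd μ q), ← habs]
  exact ⟨by linarith [(two_mul_primF_fSub_bounds_of_pos hμ hq (one_pos.trans_le ht)).1],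
    primF_fSub_le_abs_of_one_le hμ hq ht⟩

theorem two_mul_primF_fSub_bounds (hμ : 0 < μ) (hq : 1 ≤ q) (ht : t ≠ 0) :
    0 < 2 * primF (fSub μ q) t ∧ 2 * primF (fSub μ q) t ≤ fSub μ q t * t := by
  have hmul : fSub μ q |t| * |t| = fSub μ q t * t := by
    rcases abs_choice t with h | h <;> simp [h, (fSub_odd μ q).eq]
  rw [← primF_abs_of_odd (fSub_odd μ q), ← hmul]
  exact two_mul_primF_fSub_bounds_of_pos hμ hq (abs_pos.2 ht)

end fSub

/-- the function of Example 3.4 is continuous, odd and satisfies (H). -/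
theorem statement17 (q μ : ℝ) (hq1 : 1 < q) (hq2 : q < 2)
    (hμ0 : 0 < μ) (hμ : μ < lam1 / (2 * π)) :
    Continuous (fSub μ q) ∧ (∀ t : ℝ, fSub μ q (-t) = -(fSub μ q t)) ∧
    fSub μ q 0 = 0 ∧ HypH (fSub μ q) := by
  have hodd := fSub_odd μ q
  have hcont := continuous_fSub (μ := μ) hq1.le
  have hlimsup : limsup (fun t => primF (fSub μ q) t / t ^ 2) (𝓝[≠] 0) < lam1 / (4 * π) := by
    rw [limsup_primF_fSub_div_sq, lt_div_iff₀ (by positivity)]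
    rw [lt_div_iff₀ (by positivity)] at hμ
    linarith
  exact ⟨hcont, hodd, hodd.map_zero, hcont, hodd.map_zero,
    ⟨1, one_pos, 1, one_pos, fun t ht => by
      simpa only [one_mul] using primF_fSub_pos_and_le_abs hμ0 hq1.le ht⟩,
    fun t ht => two_mul_primF_fSub_bounds hμ0 hq1.le ht, hlimsup,
    fun α hα => tendsto_abs_fSub_mul_exp_cocompact hq2 hα⟩
end
end
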